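/- arXiv:1612.01403 — 3 statements merged into one kernel-verified Lean document; each statement's English description precedes it below -/
import Mathlib

section
/- Let ρ_X be a probability density on ℝ^d and suppose ρ_Z = ψ(ρ_X) (i.e. ρ_Z is the true marginal of the measurements). Let π be a probability density on ℝ^d that is globally supported (π(x) > 0 for almost every x), suppose ψ(π)(z) > 0 for almost every z, and suppose all integrals below are finite. If (Ψπ)(x) = π(x) for almost every x ∈ ℝ^d, then ψ(π)(z) = ρ_Z(z) for almost every z ∈ ℝ^n. (Implication (ii) ⇒ (i) of the Proposition on fixed points of the prior iteration.) -/
/-!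
Write `g = ψ π`, `h = ψ ρ_X = ρ_Z` and `K x z = ρ_E (z - φ x)`. Since `π > 0` a.e., the fixed-point
equation says `∫ K x z * h z / g z dz = 1 = ∫ K x z dz`, i.e. `K x ·` is orthogonal to `(g - h) / g`.
Integrating this against `π - ρ_X` and applying Fubini turns it into
`∫ (g - h)² / g = ⟨g - h, g - h⟩_π = 0`, so `g = h` a.e.
-/

open MeasureTheory

section ChiSquare

variable {Z : Type*} [MeasurableSpace Z] {ν : Measure Z}

theorem ae_eq_of_integral_sq_sub_div_eq_zero {g h : Z → ℝ} (hg : ∀ᵐ z ∂ν, 0 < g z)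
    (hint : Integrable (fun z => (g z - h z) ^ 2 / g z) ν)
    (h0 : ∫ z, (g z - h z) ^ 2 / g z ∂ν = 0) : g =ᵐ[ν] h := by
  have hnonneg : 0 ≤ᵐ[ν] fun z => (g z - h z) ^ 2 / g z :=
    hg.mono fun z hz => div_nonneg (sq_nonneg _) hz.le
  filter_upwards [(integral_eq_zero_iff_of_nonneg_ae hnonneg hint).1 h0, hg] with z hz hgz
  rw [Pi.zero_apply, div_eq_zero_iff, sq_eq_zero_iff, sub_eq_zero] at hz
  exact hz.resolve_right hgz.ne'

theorem integral_mul_sub_div_eq_zero {K g h : Z → ℝ} (hg : ∀ᵐ z ∂ν, g z ≠ 0)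
    (hK : ∫ z, K z ∂ν = 1) (hKh : ∫ z, K z / g z * h z ∂ν = 1) :
    ∫ z, K z * ((g z - h z) / g z) ∂ν = 0 := by
  have hsplit : (fun z => K z * ((g z - h z) / g z)) =ᵐ[ν] fun z => K z - K z / g z * h z := by
    filter_upwards [hg] with z hz
    field_simp
  rw [integral_congr_ae hsplit,
    integral_sub (.of_integral_ne_zero (by simp [hK])) (.of_integral_ne_zero (by simp [hKh])),
    hK, hKh, sub_self]

end ChiSquare

theorem integral_sub_mul_mul_div_eq_sq_div {X : Type*} [MeasurableSpace X] {μ : Measure X}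
    {K p q : X → ℝ} {a b : ℝ} (ha : a ≠ 0)
    (hKp : a = ∫ x, K x * p x ∂μ) (hKq : b = ∫ x, K x * q x ∂μ)
    (hint : Integrable (fun x => (p x - q x) * K x * ((a - b) / a)) μ) :
    ∫ x, (p x - q x) * K x * ((a - b) / a) ∂μ = (a - b) ^ 2 / a := by
  rw [integral_mul_const]
  by_cases hab : a = b
  · simp [hab]
  have hc : IsUnit ((a - b) / a) := (div_ne_zero (sub_ne_zero.2 hab) ha).isUnit
  have hKp_int : Integrable (fun x => K x * p x) μ := .of_integral_ne_zero (hKp ▸ ha)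
  have hdiff_int := (integrable_mul_const_iff hc _).1 hint
  have hKq_int : Integrable (fun x => K x * q x) μ :=
    (hKp_int.sub hdiff_int).congr (.of_forall fun x => by simp only [Pi.sub_apply]; ring)
  have hdiff : ∫ x, (p x - q x) * K x ∂μ = a - b := by
    simp_rw [sub_mul, mul_comm _ (K _)]
    rw [integral_sub hKp_int hKq_int, hKp, hKq]
  rw [hdiff]
  ring

theorem ae_eq_of_integral_kernel_div_mul_eq_one {X Z : Type*} [MeasurableSpace X]
    [MeasurableSpace Z] {μ : Measure X} {ν : Measure Z} [SFinite μ] [SFinite ν]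
    {K : X → Z → ℝ} {p q : X → ℝ} {g h : Z → ℝ}
    (hg : ∀ᵐ z ∂ν, g z = ∫ x, K x z * p x ∂μ) (hh : ∀ᵐ z ∂ν, h z = ∫ x, K x z * q x ∂μ)
    (hg_pos : ∀ᵐ z ∂ν, 0 < g z) (hK : ∀ᵐ x ∂μ, ∫ z, K x z ∂ν = 1)
    (hfix : ∀ᵐ x ∂μ, ∫ z, K x z / g z * h z ∂ν = 1)
    (hF : Integrable (fun y : X × Z => (p y.1 - q y.1) * K y.1 y.2 * ((g y.2 - h y.2) / g y.2))
      (μ.prod ν)) :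
    g =ᵐ[ν] h := by
  have h_dz : ∀ᵐ x ∂μ, ∫ z, (p x - q x) * K x z * ((g z - h z) / g z) ∂ν = 0 := by
    filter_upwards [hK, hfix] with x hKx hfixx
    simp_rw [mul_assoc]
    rw [integral_const_mul,
      integral_mul_sub_div_eq_zero (hg_pos.mono fun z hz => hz.ne') hKx hfixx, mul_zero]
  have h_dx : ∀ᵐ z ∂ν, ∫ x, (p x - q x) * K x z * ((g z - h z) / g z) ∂μ =
      (g z - h z) ^ 2 / g z := by
    filter_upwards [hg, hh, hg_pos, hF.prod_left_ae] with z hgz hhz hpos hFz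
    exact integral_sub_mul_mul_div_eq_sq_div hpos.ne' hgz hhz hFz
  refine ae_eq_of_integral_sq_sub_div_eq_zero hg_pos (hF.integral_prod_right.congr h_dx) ?_
  rw [← integral_congr_ae h_dx, ← integral_integral_swap hF, integral_congr_ae h_dz, integral_zero]

theorem measurable_integral_sub_mul {X G : Type*} [MeasurableSpace X] [MeasurableSpace G]
    [AddGroup G] [MeasurableSub₂ G] {μ : Measure X} [SFinite μ] {ρ : G → ℝ} {φ : X → G}
    {p : X → ℝ} (hρ : Measurable ρ) (hφ : Measurable φ) (hp : Measurable p) :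
    Measurable fun z => ∫ x, ρ (z - φ x) * p x ∂μ :=
  ((hρ.comp (measurable_fst.sub (hφ.comp measurable_snd))).mul
    (hp.comp measurable_snd)).stronglyMeasurable.integral_prod_right'.measurable

theorem fixed_point_implies_marginal_eq_general {d n : ℕ}
    (φ : (Fin d → ℝ) → (Fin n → ℝ)) (hφ : Measurable φ)
    (ρE : (Fin n → ℝ) → ℝ) (hρE_meas : Measurable ρE)
    (hρE_int : (∫ e, ρE e) = 1)
    (ρX : (Fin d → ℝ) → ℝ) (hρX_meas : Measurable ρX)
    (ψ : ((Fin d → ℝ) → ℝ) → (Fin n → ℝ) → ℝ)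
    (hψ : ∀ p z, ψ p z = ∫ x, ρE (z - φ x) * p x)
    (ρZ : (Fin n → ℝ) → ℝ)
    (hρZ_eq : ∀ᵐ z ∂(volume : Measure (Fin n → ℝ)), ρZ z = ψ ρX z)
    (π : (Fin d → ℝ) → ℝ) (hπ_meas : Measurable π)
    (hπ_pos : ∀ᵐ x ∂(volume : Measure (Fin d → ℝ)), 0 < π x)
    (hψπ_pos : ∀ᵐ z ∂(volume : Measure (Fin n → ℝ)), 0 < ψ π z)
    (hint2 : Integrable (fun p : (Fin d → ℝ) × (Fin n → ℝ) =>
      |π p.1 - ρX p.1| * ρE (p.2 - φ p.1) * (|ψ π p.2 - ρZ p.2| / ψ π p.2)))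
    (Ψ : ((Fin d → ℝ) → ℝ) → (Fin d → ℝ) → ℝ)
    (hΨ : ∀ p x, Ψ p x = p x * ∫ z, (ρE (z - φ x) / ψ p z) * ρZ z)
    (hfix : ∀ᵐ x ∂(volume : Measure (Fin d → ℝ)), Ψ π x = π x) :
    ∀ᵐ z ∂(volume : Measure (Fin n → ℝ)), ψ π z = ρZ z := by
  have hψ_meas : ∀ p, Measurable p → Measurable (ψ p) := fun p hp => by
    simpa only [← hψ] using measurable_integral_sub_mul (μ := volume) hρE_meas hφ hp
  have hfix' : ∀ᵐ x, ∫ z, ρE (z - φ x) / ψ π z * ψ ρX z = 1 := by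
    filter_upwards [hfix, hπ_pos] with x hx hpos
    rw [hΨ, mul_eq_left₀ hpos.ne'] at hx
    rw [← hx]
    exact integral_congr_ae (hρZ_eq.mono fun z hz => by simp only [hz])
  have hF : Integrable (fun y : (Fin d → ℝ) × (Fin n → ℝ) => (π y.1 - ρX y.1) *
      ρE (y.2 - φ y.1) * ((ψ π y.2 - ψ ρX y.2) / ψ π y.2)) (volume.prod volume) := by
    rw [← Measure.volume_eq_prod]
    refine hint2.congr' (Measurable.aestronglyMeasurable ?_) ?_
    · have := hψ_meas π hπ_meas
      have := hψ_meas ρX hρX_meas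
      fun_prop
    · filter_upwards [Measure.quasiMeasurePreserving_snd.ae hρZ_eq] with y hy
      simp [hy]
  have hψ_eq := ae_eq_of_integral_kernel_div_mul_eq_one (.of_forall (hψ π))
    (.of_forall (hψ ρX)) hψπ_pos
    (.of_forall fun x => (integral_sub_right_eq_self ρE (φ x)).trans hρE_int) hfix' hF
  filter_upwards [hψ_eq, hρZ_eq] with z h1 h2
  rw [h1, h2]

/-- If `ρ_Z = ψ(ρ_X)` is the true marginal, `π` is a globally supported
probability density with `ψ π > 0` a.e. and `Ψ π = π` a.e. (and the relevant integrals
are finite), then `ψ π = ρ_Z` a.e. (implication (ii) ⇒ (i) of the Proposition). -/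
theorem fixed_point_implies_marginal_eq {d n : ℕ}
    (φ : (Fin d → ℝ) → (Fin n → ℝ)) (hφ : Measurable φ)
    (ρE : (Fin n → ℝ) → ℝ) (hρE_meas : Measurable ρE)
    (hρE_nonneg : ∀ e, 0 ≤ ρE e) (hρE_int : (∫ e, ρE e) = 1)
    (ρX : (Fin d → ℝ) → ℝ) (hρX_meas : Measurable ρX)
    (hρX_nonneg : ∀ x, 0 ≤ ρX x) (hρX_int : (∫ x, ρX x) = 1)
    (ψ : ((Fin d → ℝ) → ℝ) → (Fin n → ℝ) → ℝ)
    (hψ : ∀ p z, ψ p z = ∫ x, ρE (z - φ x) * p x)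
    (ρZ : (Fin n → ℝ) → ℝ)
    (hρZ_eq : ∀ᵐ z ∂(volume : Measure (Fin n → ℝ)), ρZ z = ψ ρX z)
    (π : (Fin d → ℝ) → ℝ) (hπ_meas : Measurable π)
    (hπ_nonneg : ∀ x, 0 ≤ π x) (hπ_int : (∫ x, π x) = 1)
    (hπ_pos : ∀ᵐ x ∂(volume : Measure (Fin d → ℝ)), 0 < π x)
    (hψπ_pos : ∀ᵐ z ∂(volume : Measure (Fin n → ℝ)), 0 < ψ π z)
    (hint1 : Integrable (fun z => (ψ π z - ρZ z) ^ 2 / ψ π z))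
    (hint2 : Integrable (fun p : (Fin d → ℝ) × (Fin n → ℝ) =>
      |π p.1 - ρX p.1| * ρE (p.2 - φ p.1) * (|ψ π p.2 - ρZ p.2| / ψ π p.2)))
    (Ψ : ((Fin d → ℝ) → ℝ) → (Fin d → ℝ) → ℝ)
    (hΨ : ∀ p x, Ψ p x = p x * ∫ z, (ρE (z - φ x) / ψ p z) * ρZ z)
    (hfix : ∀ᵐ x ∂(volume : Measure (Fin d → ℝ)), Ψ π x = π x) :
    ∀ᵐ z ∂(volume : Measure (Fin n → ℝ)), ψ π z = ρZ z :=
  fixed_point_implies_marginal_eq_general φ hφ ρE hρE_meas hρE_int ρX hρX_meas ψ hψ ρZ hρZ_eq π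
    hπ_meas hπ_pos hψπ_pos hint2 Ψ hΨ hfix
end

section
/- Let π be a probability density on ℝ^d such that ψ(π)(z) > 0 for almost every z, and assume all integrals below are well defined and finite. Then one iteration step does not decrease the infinite-data log-likelihood: L_cc(Ψπ) ≥ L_cc(π). -/
/-!
Write `s = ψ(π)`, `t = ψ(Ψπ)` and `Ψπ = π c`. Since `log u ≤ u - 1`,
`L_cc(Ψπ) - L_cc(π) ≥ 1 - ∫ ρ_Z s / t`, so it suffices that `∫ ρ_Z s / t ≤ 1`.
For fixed `z`, Cauchy–Schwarz for the posterior weights `ρ_E(z - φ x) π(x) / s(z)` gives the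
harmonic–arithmetic mean inequality `s / t ≤ s⁻¹ ∫ ρ_E(z - φ x) π(x) / c(x) dx`. Integrating
against `ρ_Z` and exchanging the integrals (the definition of `c`) turns the right-hand side into
`∫ π c / c ≤ ∫ π = 1`. All of this is done in `ℝ≥0∞`, where Tonelli needs no integrability;
finiteness of `c` and of `t` (a.e.) then follows from `∫ π c ≤ ∫ ρ_Z = 1` and `∫ t = ∫ π c`.
-/

open MeasureTheory
open scoped ENNReal

section HarmonicMean

variable {α : Type*} [MeasurableSpace α] {μ : Measure α} {A C : α → ℝ≥0∞}

theorem lintegral_mul_self_le_lintegral_mul_mul_lintegral_div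
    (hA : AEMeasurable A μ) (hC : AEMeasurable C μ)
    (hC_pos : ∀ᵐ x ∂μ, A x ≠ 0 → C x ≠ 0 ∧ C x ≠ ∞) :
    (∫⁻ x, A x ∂μ) * ∫⁻ x, A x ∂μ ≤ (∫⁻ x, A x * C x ∂μ) * ∫⁻ x, A x / C x ∂μ := by
  set f : α → ℝ≥0∞ := fun x => (A x * C x) ^ (2⁻¹ : ℝ)
  set g : α → ℝ≥0∞ := fun x => (A x / C x) ^ (2⁻¹ : ℝ)
  have hfg : ∀ᵐ x ∂μ, (f * g) x = A x := by
    filter_upwards [hC_pos] with x hx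
    rcases eq_or_ne (A x) 0 with h0 | h0
    · simp [f, h0]
    have hAA : A x * C x * (A x / C x) = A x ^ (2 : ℝ) := by
      rw [ENNReal.rpow_two, sq, mul_assoc, ENNReal.mul_div_cancel (hx h0).1 (hx h0).2]
    simp only [Pi.mul_apply, f, g]
    rw [← ENNReal.mul_rpow_of_nonneg _ _ (by norm_num), hAA, ENNReal.rpow_rpow_inv two_ne_zero]
  have holder := ENNReal.lintegral_mul_le_Lp_mul_Lq μ Real.HolderConjugate.two_two
    (f := f) (g := g) ((hA.mul hC).pow_const _) ((hA.div hC).pow_const _)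
  simp only [one_div, lintegral_congr_ae hfg, f, g, ENNReal.rpow_inv_rpow two_ne_zero] at holder
  rw [← ENNReal.mul_rpow_of_nonneg _ _ (by norm_num), ENNReal.le_rpow_inv_iff two_pos,
    ENNReal.rpow_two, sq] at holder
  exact holder

theorem lintegral_div_lintegral_mul_le (hA : AEMeasurable A μ) (hC : AEMeasurable C μ)
    (hA_ne_top : ∫⁻ x, A x ∂μ ≠ ∞) (hC_ne_top : ∀ᵐ x ∂μ, A x ≠ 0 → C x ≠ ∞) :
    (∫⁻ x, A x ∂μ) / ∫⁻ x, A x * C x ∂μ ≤ (∫⁻ x, A x / C x ∂μ) / ∫⁻ x, A x ∂μ := by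
  by_cases hC_pos : ∀ᵐ x ∂μ, A x ≠ 0 → C x ≠ 0
  · have hCS := lintegral_mul_self_le_lintegral_mul_mul_lintegral_div hA hC <| by
      filter_upwards [hC_pos, hC_ne_top] with x h0 htop hx using ⟨h0 hx, htop hx⟩
    rcases eq_or_ne (∫⁻ x, A x ∂μ) 0 with hS | hS
    · simp [hS]
    rw [ENNReal.le_div_iff_mul_le (Or.inl hS) (Or.inl hA_ne_top), ← ENNReal.mul_div_right_comm]
    calc _ ≤ (∫⁻ x, A x * C x ∂μ) * (∫⁻ x, A x / C x ∂μ) / ∫⁻ x, A x * C x ∂μ := by gcongr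
      _ ≤ ∫⁻ x, A x / C x ∂μ := by rw [mul_div_assoc]; exact ENNReal.mul_div_le
  · -- `C` vanishes on a non-null part of `{A ≠ 0}`, so `∫ A / C = ∞`
    have hR : ∫⁻ x, A x / C x ∂μ = ∞ := by
      refine lintegral_eq_top_of_measure_eq_top_ne_zero (hA.div hC) fun h => hC_pos ?_
      rw [ae_iff]
      refine measure_mono_null (fun x hx => ?_) h
      simp only [Set.mem_ofPred_eq, Classical.not_imp, not_not] at hx ⊢
      exact ENNReal.div_eq_top.2 (Or.inl hx)
    rw [hR, ENNReal.top_div_of_ne_top hA_ne_top]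
    exact le_top

end HarmonicMean

section Mixture

variable {X Z : Type*} [MeasurableSpace X] [MeasurableSpace Z] {μ : Measure X} {ν : Measure Z}

noncomputable def lmixture (μ : Measure X) (k : X → Z → ℝ≥0∞) (p : X → ℝ≥0∞) (z : Z) : ℝ≥0∞ :=
  ∫⁻ x, k x z * p x ∂μ

/-- The factor `c` in `Ψ π = π * c`. -/
noncomputable def emMultiplier (μ : Measure X) (ν : Measure Z) (k : X → Z → ℝ≥0∞) (p : X → ℝ≥0∞)
    (q : Z → ℝ≥0∞) (x : X) : ℝ≥0∞ :=
  ∫⁻ z, k x z / lmixture μ k p z * q z ∂ν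

variable [SFinite μ] [SFinite ν] {k : X → Z → ℝ≥0∞} {p : X → ℝ≥0∞} {q : Z → ℝ≥0∞}

theorem measurable_lmixture (hk : Measurable (Function.uncurry k)) (hp : Measurable p) :
    Measurable (lmixture μ k p) :=
  Measurable.lintegral_prod_left' (hk.mul (hp.comp measurable_fst))

theorem measurable_emMultiplier (hk : Measurable (Function.uncurry k)) (hp : Measurable p)
    (hq : Measurable q) : Measurable (emMultiplier μ ν k p q) :=
  Measurable.lintegral_prod_right'
    ((hk.div ((measurable_lmixture hk hp).comp measurable_snd)).mul (hq.comp measurable_snd))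

theorem lintegral_lmixture (hk : Measurable (Function.uncurry k))
    (hk_one : ∀ x, ∫⁻ z, k x z ∂ν = 1) (hp : Measurable p) :
    ∫⁻ z, lmixture μ k p z ∂ν = ∫⁻ x, p x ∂μ := by
  simp only [lmixture]
  rw [← lintegral_lintegral_swap (hk.mul (hp.comp measurable_fst)).aemeasurable]
  refine lintegral_congr fun x => ?_
  rw [lintegral_mul_const _ hk.of_uncurry_left, hk_one, one_mul]

theorem lintegral_mul_emMultiplier_le (hk : Measurable (Function.uncurry k)) (hp : Measurable p)
    (hq : Measurable q) : ∫⁻ x, p x * emMultiplier μ ν k p q x ∂μ ≤ ∫⁻ z, q z ∂ν := by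
  set s := lmixture μ k p
  have hs := measurable_lmixture (μ := μ) hk hp
  calc ∫⁻ x, p x * emMultiplier μ ν k p q x ∂μ
      = ∫⁻ x, ∫⁻ z, k x z * p x * (q z / s z) ∂ν ∂μ := by
        refine lintegral_congr fun x => ?_
        rw [emMultiplier, ← lintegral_const_mul (f := fun z => k x z / s z * q z) _
          ((hk.of_uncurry_left.div hs).mul hq)]
        simp only [div_eq_mul_inv]
        congr with z
        ring
    _ = ∫⁻ z, ∫⁻ x, k x z * p x * (q z / s z) ∂μ ∂ν :=
        lintegral_lintegral_swap ((hk.mul (hp.comp measurable_fst)).mul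
          ((hq.div hs).comp measurable_snd)).aemeasurable
    _ = ∫⁻ z, s z * (q z / s z) ∂ν := by
        refine lintegral_congr fun z => ?_
        exact lintegral_mul_const _ (hk.of_uncurry_right.mul hp)
    _ ≤ ∫⁻ z, q z ∂ν := lintegral_mono fun z => ENNReal.mul_div_le

theorem ae_emMultiplier_ne_top (hk : Measurable (Function.uncurry k)) (hp : Measurable p)
    (hq : Measurable q) (hq_fin : ∫⁻ z, q z ∂ν ≠ ∞) :
    ∀ᵐ x ∂μ, p x ≠ 0 → emMultiplier μ ν k p q x ≠ ∞ := by
  have hpc := ae_lt_top' (hp.mul (measurable_emMultiplier (μ := μ) (ν := ν) hk hp hq)).aemeasurable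
    ((lintegral_mul_emMultiplier_le hk hp hq).trans_lt hq_fin.lt_top).ne
  filter_upwards [hpc] with x hx hpx hcx
  simp [hcx, hpx] at hx

theorem lintegral_mul_lmixture_div_le (hk : Measurable (Function.uncurry k))
    (hp : Measurable p) (hq : Measurable q) (hs : ∀ᵐ z ∂ν, lmixture μ k p z ≠ ∞)
    (hq_fin : ∫⁻ z, q z ∂ν ≠ ∞) :
    ∫⁻ z, q z * (lmixture μ k p z /
      lmixture μ k (fun x => p x * emMultiplier μ ν k p q x) z) ∂ν ≤ ∫⁻ x, p x ∂μ := by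
  set s := lmixture μ k p
  set c := emMultiplier μ ν k p q
  have hs_meas : Measurable s := measurable_lmixture hk hp
  have hc_meas : Measurable c := measurable_emMultiplier hk hp hq
  have hc := ae_emMultiplier_ne_top (μ := μ) hk hp hq hq_fin
  have harmonic : ∀ᵐ z ∂ν, s z / lmixture μ k (fun x => p x * c x) z ≤
      (∫⁻ x, k x z * p x / c x ∂μ) / s z := by
    filter_upwards [hs] with z hsz
    simpa only [s, lmixture, mul_assoc] using lintegral_div_lintegral_mul_le
      (A := fun x => k x z * p x) (hk.of_uncurry_right.mul hp).aemeasurable hc_meas.aemeasurable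
      hsz (by filter_upwards [hc] with x hx hkp using hx (right_ne_zero_of_mul hkp))
  calc _ ≤ ∫⁻ z, q z * ((∫⁻ x, k x z * p x / c x ∂μ) / s z) ∂ν :=
        lintegral_mono_ae (harmonic.mono fun z h => by gcongr)
    _ = ∫⁻ z, ∫⁻ x, p x / c x * (k x z / s z * q z) ∂μ ∂ν := by
        refine lintegral_congr fun z => ?_
        rw [mul_comm, ← ENNReal.mul_div_right_comm, mul_div_assoc,
          ← lintegral_mul_const (f := fun x => k x z * p x / c x) _
          ((hk.of_uncurry_right.mul hp).div hc_meas)]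
        simp only [div_eq_mul_inv]
        congr with x
        ring
    _ = ∫⁻ x, ∫⁻ z, p x / c x * (k x z / s z * q z) ∂ν ∂μ :=
        (lintegral_lintegral_swap (((hp.div hc_meas).comp measurable_fst).mul
          ((hk.div (hs_meas.comp measurable_snd)).mul (hq.comp measurable_snd))).aemeasurable).symm
    _ = ∫⁻ x, p x / c x * c x ∂μ := by
        refine lintegral_congr fun x => ?_
        exact lintegral_const_mul (f := fun z => k x z / s z * q z) _
          ((hk.of_uncurry_left.div hs_meas).mul hq)
    _ ≤ ∫⁻ x, p x ∂μ := lintegral_mono fun x => by rw [mul_comm]; exact ENNReal.mul_div_le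

theorem ae_lmixture_emUpdate_ne_top (hk : Measurable (Function.uncurry k))
    (hk_one : ∀ x, ∫⁻ z, k x z ∂ν = 1) (hp : Measurable p) (hq : Measurable q)
    (hq_fin : ∫⁻ z, q z ∂ν ≠ ∞) :
    ∀ᵐ z ∂ν, lmixture μ k (fun x => p x * emMultiplier μ ν k p q x) z ≠ ∞ := by
  have hpc : Measurable fun x => p x * emMultiplier μ ν k p q x :=
    hp.mul (measurable_emMultiplier hk hp hq)
  refine (ae_lt_top' (measurable_lmixture hk hpc).aemeasurable ?_).mono fun _ => LT.lt.ne
  rw [lintegral_lmixture hk hk_one hpc]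
  exact ((lintegral_mul_emMultiplier_le hk hp hq).trans_lt hq_fin.lt_top).ne

theorem ae_lmixture_emUpdate_ne_zero (hk : Measurable (Function.uncurry k)) (hp : Measurable p)
    (hq : Measurable q) (hs : ∀ᵐ z ∂ν, lmixture μ k p z ≠ 0 ∧ lmixture μ k p z ≠ ∞)
    (hp_fin : ∫⁻ x, p x ∂μ ≠ ∞) (hq_fin : ∫⁻ z, q z ∂ν ≠ ∞) :
    ∀ᵐ z ∂ν, q z ≠ 0 → lmixture μ k (fun x => p x * emMultiplier μ ν k p q x) z ≠ 0 := by
  set t := lmixture μ k (fun x => p x * emMultiplier μ ν k p q x)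
  have ht_meas : Measurable t :=
    measurable_lmixture hk (hp.mul (measurable_emMultiplier hk hp hq))
  have hratio := ae_lt_top' (f := fun z => q z * (lmixture μ k p z / t z))
    (hq.mul ((measurable_lmixture hk hp).div ht_meas)).aemeasurable
    ((lintegral_mul_lmixture_div_le hk hp hq (hs.mono fun _ h => h.2) hq_fin).trans_lt
      hp_fin.lt_top).ne
  filter_upwards [hratio, hs] with z hz hsz hqz ht
  rw [ht, ENNReal.div_zero hsz.1, ENNReal.mul_top hqz] at hz
  exact hz.false

end Mixture

section LogRatio

variable {Z : Type*} [MeasurableSpace Z] {ν : Measure Z}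

theorem lintegral_ofReal_eq_one {f : Z → ℝ} (hf : ∀ z, 0 ≤ f z) (h_one : ∫ z, f z ∂ν = 1) :
    ∫⁻ z, ENNReal.ofReal (f z) ∂ν = 1 := by
  rw [← ofReal_integral_eq_lintegral_ofReal (Integrable.of_integral_ne_zero (by simp [h_one]))
    (ae_of_all _ hf), h_one, ENNReal.ofReal_one]

theorem ofReal_mul_toReal_div_toReal {r : ℝ} (hr : 0 ≤ r) {a b : ℝ≥0∞} (ha : a ≠ ∞)
    (hb : r ≠ 0 → b ≠ 0) :
    ENNReal.ofReal (r * (a.toReal / b.toReal)) = ENNReal.ofReal r * (a / b) := by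
  rcases eq_or_ne r 0 with rfl | hr0
  · simp
  rw [ENNReal.ofReal_mul hr, ← ENNReal.toReal_div,
    ENNReal.ofReal_toReal (ENNReal.div_ne_top ha (hb hr0))]

theorem integral_mul_log_le_integral_mul_log {ρ S T : Z → ℝ} (hρ : Integrable ρ ν)
    (hρ_nonneg : ∀ z, 0 ≤ ρ z) (hS : AEMeasurable S ν) (hT : AEMeasurable T ν)
    (hST : ∀ᵐ z ∂ν, ρ z ≠ 0 → 0 < S z ∧ 0 < T z)
    (hratio : ∫⁻ z, ENNReal.ofReal (ρ z * (S z / T z)) ∂ν ≤ ENNReal.ofReal (∫ z, ρ z ∂ν))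
    (hlogS : Integrable (fun z => ρ z * Real.log (S z)) ν)
    (hlogT : Integrable (fun z => ρ z * Real.log (T z)) ν) :
    ∫ z, ρ z * Real.log (S z) ∂ν ≤ ∫ z, ρ z * Real.log (T z) ∂ν := by
  set u := fun z => ρ z * (S z / T z)
  have hu_nonneg : 0 ≤ᵐ[ν] u := by
    filter_upwards [hST] with z hz
    rcases eq_or_ne (ρ z) 0 with h0 | h0
    · simp [u, h0]
    · exact mul_nonneg (hρ_nonneg z) (div_pos (hz h0).1 (hz h0).2).le
  have hu_meas : AEStronglyMeasurable u ν := hρ.1.mul (hS.div hT).aestronglyMeasurable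
  have hu : Integrable u ν := ⟨hu_meas, (hasFiniteIntegral_iff_ofReal hu_nonneg).2
    (hratio.trans_lt ENNReal.ofReal_lt_top)⟩
  have hu_le : ∫ z, u z ∂ν ≤ ∫ z, ρ z ∂ν := by
    rw [integral_eq_lintegral_of_nonneg_ae hu_nonneg hu_meas]
    exact ENNReal.toReal_le_of_le_ofReal (integral_nonneg hρ_nonneg) hratio
  have hpointwise : ∀ᵐ z ∂ν, ρ z - u z ≤ ρ z * Real.log (T z) - ρ z * Real.log (S z) := by
    filter_upwards [hST] with z hz
    rcases eq_or_ne (ρ z) 0 with h0 | h0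
    · simp [u, h0]
    obtain ⟨hSz, hTz⟩ := hz h0
    have hlog := Real.log_le_sub_one_of_pos (div_pos hSz hTz)
    rw [Real.log_div hSz.ne' hTz.ne'] at hlog
    have := mul_le_mul_of_nonneg_left hlog (hρ_nonneg z)
    rw [mul_sub, mul_sub, mul_one] at this
    linarith
  have hmono := integral_mono_ae (hρ.sub hu) (hlogT.sub hlogS) hpointwise
  simp only [Pi.sub_apply] at hmono
  rw [integral_sub hρ hu, integral_sub hlogT hlogS] at hmono
  linarith

end LogRatio

section RealMixture

variable {X Z : Type*} [MeasurableSpace X] [MeasurableSpace Z] {μ : Measure X} {ν : Measure Z}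

/-- With `κ x z = ρ_E (z - φ x)`, `mixture` and `emUpdate` are the paper's `ψ` and `Ψ`. -/
noncomputable def mixture (μ : Measure X) (κ : X → Z → ℝ) (π : X → ℝ) (z : Z) : ℝ :=
  ∫ x, κ x z * π x ∂μ

noncomputable def emUpdate (μ : Measure X) (ν : Measure Z) (κ : X → Z → ℝ) (ρ : Z → ℝ)
    (π : X → ℝ) (x : X) : ℝ :=
  π x * ∫ z, κ x z / mixture μ κ π z * ρ z ∂ν

variable {κ : X → Z → ℝ} {ρ : Z → ℝ} {π : X → ℝ}

theorem mixture_eq_toReal_lmixture (hκ : Measurable (Function.uncurry κ))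
    (hκ_nonneg : ∀ x z, 0 ≤ κ x z) (hπ : AEStronglyMeasurable π μ) (hπ_nonneg : ∀ x, 0 ≤ π x)
    (z : Z) :
    mixture μ κ π z = (lmixture μ (fun x z => ENNReal.ofReal (κ x z))
      (fun x => ENNReal.ofReal (π x)) z).toReal := by
  rw [mixture, integral_eq_lintegral_of_nonneg_ae
    (ae_of_all _ fun x => mul_nonneg (hκ_nonneg x z) (hπ_nonneg x))
    (hκ.of_uncurry_right.aestronglyMeasurable.mul hπ)]
  simp only [ENNReal.ofReal_mul (hκ_nonneg _ z), lmixture]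

theorem ae_ofReal_emUpdate [SFinite μ] [SFinite ν] (hκ : Measurable (Function.uncurry κ))
    (hκ_nonneg : ∀ x z, 0 ≤ κ x z) (hρ : Measurable ρ) (hρ_nonneg : ∀ z, 0 ≤ ρ z)
    (hρ_int : Integrable ρ ν) (hπ : Measurable π) (hπ_nonneg : ∀ x, 0 ≤ π x)
    (hmix_pos : ∀ᵐ z ∂ν, 0 < mixture μ κ π z) :
    ∀ᵐ x ∂μ, ENNReal.ofReal (emUpdate μ ν κ ρ π x) = ENNReal.ofReal (π x) *
      emMultiplier μ ν (fun x z => ENNReal.ofReal (κ x z)) (fun x => ENNReal.ofReal (π x))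
        (fun z => ENNReal.ofReal (ρ z)) x := by
  set k := fun x z => ENNReal.ofReal (κ x z)
  set p := fun x => ENNReal.ofReal (π x)
  set q := fun z => ENNReal.ofReal (ρ z)
  have hk : Measurable (Function.uncurry k) := ENNReal.measurable_ofReal.comp hκ
  have hmix : mixture μ κ π = fun z => (lmixture μ k p z).toReal :=
    funext (mixture_eq_toReal_lmixture hκ hκ_nonneg hπ.aestronglyMeasurable hπ_nonneg)
  have hmix_meas : Measurable (mixture μ κ π) :=
    hmix ▸ (measurable_lmixture hk hπ.ennreal_ofReal).ennreal_toReal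
  have hmultiplier : ∀ x, ∫ z, κ x z / mixture μ κ π z * ρ z ∂ν =
      (emMultiplier μ ν k p q x).toReal := by
    intro x
    rw [integral_eq_lintegral_of_nonneg_ae (ae_of_all _ fun z => mul_nonneg
        (div_nonneg (hκ_nonneg x z) (hmix ▸ ENNReal.toReal_nonneg)) (hρ_nonneg z))
      ((hκ.of_uncurry_left.div hmix_meas).mul hρ).aestronglyMeasurable, emMultiplier]
    congr 1
    refine lintegral_congr_ae ?_
    filter_upwards [hmix_pos] with z hz
    simp only [hmix] at hz ⊢
    rw [ENNReal.ofReal_mul (div_nonneg (hκ_nonneg x z) hz.le), ENNReal.ofReal_div_of_pos hz,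
      ENNReal.ofReal_toReal (ENNReal.toReal_pos_iff.1 hz).2.ne]
  filter_upwards [ae_emMultiplier_ne_top (μ := μ) hk hπ.ennreal_ofReal hρ.ennreal_ofReal
    hρ_int.lintegral_lt_top.ne] with x hx
  rw [emUpdate, hmultiplier, ENNReal.ofReal_mul (hπ_nonneg x)]
  rcases eq_or_ne (p x) 0 with h0 | h0
  · simp only [p] at h0; rw [h0, zero_mul, zero_mul]
  · rw [ENNReal.ofReal_toReal (hx h0)]

theorem emUpdate_nonneg (hκ_nonneg : ∀ x z, 0 ≤ κ x z) (hρ_nonneg : ∀ z, 0 ≤ ρ z)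
    (hπ_nonneg : ∀ x, 0 ≤ π x) (x : X) : 0 ≤ emUpdate μ ν κ ρ π x :=
  mul_nonneg (hπ_nonneg x) (integral_nonneg fun z => mul_nonneg
    (div_nonneg (hκ_nonneg x z)
      (integral_nonneg fun x => mul_nonneg (hκ_nonneg x z) (hπ_nonneg x))) (hρ_nonneg z))

theorem mixture_emUpdate_eq_toReal_lmixture [SFinite μ] [SFinite ν]
    (hκ : Measurable (Function.uncurry κ)) (hκ_nonneg : ∀ x z, 0 ≤ κ x z) (hρ : Measurable ρ)
    (hρ_nonneg : ∀ z, 0 ≤ ρ z) (hρ_int : Integrable ρ ν) (hπ : Measurable π)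
    (hπ_nonneg : ∀ x, 0 ≤ π x) (hmix_pos : ∀ᵐ z ∂ν, 0 < mixture μ κ π z) (z : Z) :
    mixture μ κ (emUpdate μ ν κ ρ π) z = (lmixture μ (fun x z => ENNReal.ofReal (κ x z))
      (fun x => ENNReal.ofReal (π x) * emMultiplier μ ν (fun x z => ENNReal.ofReal (κ x z))
        (fun x => ENNReal.ofReal (π x)) (fun z => ENNReal.ofReal (ρ z)) x) z).toReal := by
  have hk : Measurable (Function.uncurry fun x z => ENNReal.ofReal (κ x z)) :=
    ENNReal.measurable_ofReal.comp hκ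
  have hupdate := ae_ofReal_emUpdate hκ hκ_nonneg hρ hρ_nonneg hρ_int hπ hπ_nonneg hmix_pos
  have hupdate_meas : AEStronglyMeasurable (emUpdate μ ν κ ρ π) μ := by
    refine ((hπ.ennreal_ofReal.mul (measurable_emMultiplier (μ := μ) (ν := ν) hk
      hπ.ennreal_ofReal hρ.ennreal_ofReal)).ennreal_toReal.aestronglyMeasurable).congr ?_
    filter_upwards [hupdate] with x hx
    rw [Pi.mul_apply, ← hx, ENNReal.toReal_ofReal (emUpdate_nonneg hκ_nonneg hρ_nonneg hπ_nonneg x)]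
  rw [mixture_eq_toReal_lmixture hκ hκ_nonneg hupdate_meas
    (emUpdate_nonneg hκ_nonneg hρ_nonneg hπ_nonneg)]
  exact congrArg ENNReal.toReal (lintegral_congr_ae (hupdate.mono fun x hx => by simp only [hx]))

theorem integral_mul_log_mixture_le_emUpdate [SFinite μ] [SFinite ν]
    (hκ : Measurable (Function.uncurry κ)) (hκ_nonneg : ∀ x z, 0 ≤ κ x z)
    (hκ_one : ∀ x, ∫ z, κ x z ∂ν = 1) (hρ : Measurable ρ) (hρ_nonneg : ∀ z, 0 ≤ ρ z)
    (hρ_one : ∫ z, ρ z ∂ν = 1) (hπ : Measurable π) (hπ_nonneg : ∀ x, 0 ≤ π x)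
    (hπ_one : ∫ x, π x ∂μ = 1) (hmix_pos : ∀ᵐ z ∂ν, 0 < mixture μ κ π z)
    (hlog : Integrable (fun z => ρ z * Real.log (mixture μ κ π z)) ν)
    (hlog' : Integrable (fun z => ρ z * Real.log (mixture μ κ (emUpdate μ ν κ ρ π) z)) ν) :
    ∫ z, ρ z * Real.log (mixture μ κ π z) ∂ν ≤
      ∫ z, ρ z * Real.log (mixture μ κ (emUpdate μ ν κ ρ π) z) ∂ν := by
  set k := fun x z => ENNReal.ofReal (κ x z)
  set p := fun x => ENNReal.ofReal (π x)
  set q := fun z => ENNReal.ofReal (ρ z)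
  set s := lmixture μ k p
  set t := lmixture μ k (fun x => p x * emMultiplier μ ν k p q x)
  have hk : Measurable (Function.uncurry k) := ENNReal.measurable_ofReal.comp hκ
  have hρ_int : Integrable ρ ν := Integrable.of_integral_ne_zero (by simp [hρ_one])
  have hp_one : ∫⁻ x, p x ∂μ = 1 := lintegral_ofReal_eq_one hπ_nonneg hπ_one
  have hq_one : ∫⁻ z, q z ∂ν = 1 := lintegral_ofReal_eq_one hρ_nonneg hρ_one
  have hS : mixture μ κ π = fun z => (s z).toReal :=
    funext (mixture_eq_toReal_lmixture hκ hκ_nonneg hπ.aestronglyMeasurable hπ_nonneg)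
  have hT : mixture μ κ (emUpdate μ ν κ ρ π) = fun z => (t z).toReal := funext
    (mixture_emUpdate_eq_toReal_lmixture hκ hκ_nonneg hρ hρ_nonneg hρ_int hπ hπ_nonneg hmix_pos)
  have hs : ∀ᵐ z ∂ν, s z ≠ 0 ∧ s z ≠ ∞ := hmix_pos.mono fun z hz => by
    rw [hS, ENNReal.toReal_pos_iff] at hz
    exact ⟨hz.1.ne', hz.2.ne⟩
  have ht : ∀ᵐ z ∂ν, ρ z ≠ 0 → t z ≠ 0 ∧ t z ≠ ∞ := by
    filter_upwards [ae_lmixture_emUpdate_ne_zero hk hπ.ennreal_ofReal hρ.ennreal_ofReal hs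
        (hp_one ▸ ENNReal.one_ne_top) (hq_one ▸ ENNReal.one_ne_top),
      ae_lmixture_emUpdate_ne_top (μ := μ) hk (fun x => lintegral_ofReal_eq_one (hκ_nonneg x)
        (hκ_one x)) hπ.ennreal_ofReal hρ.ennreal_ofReal (hq_one ▸ ENNReal.one_ne_top)]
      with z ht0 ht_top hρz
    exact ⟨ht0 (ENNReal.ofReal_pos.2 ((hρ_nonneg z).lt_of_ne' hρz)).ne', ht_top⟩
  simp only [hS, hT] at hlog hlog' ⊢
  refine integral_mul_log_le_integral_mul_log hρ_int hρ_nonneg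
    (measurable_lmixture hk hπ.ennreal_ofReal).ennreal_toReal.aemeasurable
    (measurable_lmixture hk (hπ.ennreal_ofReal.mul (measurable_emMultiplier hk hπ.ennreal_ofReal
      hρ.ennreal_ofReal))).ennreal_toReal.aemeasurable ?_ ?_ hlog hlog'
  · filter_upwards [hs, ht] with z hsz htz hρz
    exact ⟨ENNReal.toReal_pos hsz.1 hsz.2, ENNReal.toReal_pos (htz hρz).1 (htz hρz).2⟩
  calc ∫⁻ z, ENNReal.ofReal (ρ z * ((s z).toReal / (t z).toReal)) ∂ν
      = ∫⁻ z, q z * (s z / t z) ∂ν := lintegral_congr_ae <| by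
        filter_upwards [hs, ht] with z hsz htz
        exact ofReal_mul_toReal_div_toReal (hρ_nonneg z) hsz.2 fun hρz => (htz hρz).1
    _ ≤ ∫⁻ x, p x ∂μ := lintegral_mul_lmixture_div_le hk hπ.ennreal_ofReal hρ.ennreal_ofReal
        (hs.mono fun _ h => h.2) (hq_one ▸ ENNReal.one_ne_top)
    _ = ENNReal.ofReal (∫ z, ρ z ∂ν) := by rw [hp_one, hρ_one, ENNReal.ofReal_one]

end RealMixture

theorem iteration_increases_likelihood_general {d n : ℕ}
    (φ : (Fin d → ℝ) → (Fin n → ℝ)) (hφ : Measurable φ)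
    (ρE : (Fin n → ℝ) → ℝ) (hρE_meas : Measurable ρE)
    (hρE_nonneg : ∀ e, 0 ≤ ρE e) (hρE_int : (∫ e, ρE e) = 1)
    (ρZ : (Fin n → ℝ) → ℝ) (hρZ_meas : Measurable ρZ)
    (hρZ_nonneg : ∀ z, 0 ≤ ρZ z) (hρZ_int : (∫ z, ρZ z) = 1)
    (ψ : ((Fin d → ℝ) → ℝ) → (Fin n → ℝ) → ℝ)
    (hψ : ∀ p z, ψ p z = ∫ x, ρE (z - φ x) * p x)
    (Ψ : ((Fin d → ℝ) → ℝ) → (Fin d → ℝ) → ℝ)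
    (hΨ : ∀ p x, Ψ p x = p x * ∫ z, (ρE (z - φ x) / ψ p z) * ρZ z)
    (Lcc : ((Fin d → ℝ) → ℝ) → ℝ)
    (hLcc : ∀ p, Lcc p = ∫ z, ρZ z * Real.log (ψ p z))
    (π : (Fin d → ℝ) → ℝ) (hπ_meas : Measurable π)
    (hπ_nonneg : ∀ x, 0 ≤ π x) (hπ_int : (∫ x, π x) = 1)
    (hψπ_pos : ∀ᵐ z ∂(volume : Measure (Fin n → ℝ)), 0 < ψ π z)
    (hint1 : Integrable (fun z => ρZ z * Real.log (ψ π z)))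
    (hint2 : Integrable (fun z => ρZ z * Real.log (ψ (Ψ π) z))) :
    Lcc π ≤ Lcc (Ψ π) := by
  obtain rfl : ψ = mixture volume (fun x z => ρE (z - φ x)) := funext₂ hψ
  obtain rfl : Ψ = emUpdate volume volume (fun x z => ρE (z - φ x)) ρZ := funext₂ hΨ
  have hκ : Measurable (Function.uncurry fun x z => ρE (z - φ x)) :=
    hρE_meas.comp (measurable_snd.sub (hφ.comp measurable_fst))
  have hκ_one : ∀ x, ∫ z, ρE (z - φ x) = 1 := fun x =>
    (integral_sub_right_eq_self ρE (φ x)).trans hρE_int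
  rw [hLcc, hLcc]
  exact integral_mul_log_mixture_le_emUpdate hκ (fun _ _ => hρE_nonneg _) hκ_one hρZ_meas
    hρZ_nonneg hρZ_int hπ_meas hπ_nonneg hπ_int hψπ_pos hint1 hint2

/-- One step of the fixed-point iteration `Ψ` does not decrease the
infinite-data log-likelihood: `L_cc(Ψ π) ≥ L_cc(π)` (all integrals involved being
assumed well defined and finite). -/
theorem iteration_increases_likelihood {d n : ℕ}
    (φ : (Fin d → ℝ) → (Fin n → ℝ)) (hφ : Measurable φ)
    (ρE : (Fin n → ℝ) → ℝ) (hρE_meas : Measurable ρE)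
    (hρE_nonneg : ∀ e, 0 ≤ ρE e) (hρE_int : (∫ e, ρE e) = 1)
    (ρZ : (Fin n → ℝ) → ℝ) (hρZ_meas : Measurable ρZ)
    (hρZ_nonneg : ∀ z, 0 ≤ ρZ z) (hρZ_int : (∫ z, ρZ z) = 1)
    (ψ : ((Fin d → ℝ) → ℝ) → (Fin n → ℝ) → ℝ)
    (hψ : ∀ p z, ψ p z = ∫ x, ρE (z - φ x) * p x)
    (Ψ : ((Fin d → ℝ) → ℝ) → (Fin d → ℝ) → ℝ)
    (hΨ : ∀ p x, Ψ p x = p x * ∫ z, (ρE (z - φ x) / ψ p z) * ρZ z)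
    (Lcc : ((Fin d → ℝ) → ℝ) → ℝ)
    (hLcc : ∀ p, Lcc p = ∫ z, ρZ z * Real.log (ψ p z))
    (π : (Fin d → ℝ) → ℝ) (hπ_meas : Measurable π)
    (hπ_nonneg : ∀ x, 0 ≤ π x) (hπ_int : (∫ x, π x) = 1)
    (hψπ_pos : ∀ᵐ z ∂(volume : Measure (Fin n → ℝ)), 0 < ψ π z)
    (hint0 : Integrable (fun p : (Fin d → ℝ) × (Fin n → ℝ) =>
      π p.1 * ρE (p.2 - φ p.1) * ρZ p.2 / ψ π p.2))
    (hint1 : Integrable (fun z => ρZ z * Real.log (ψ π z)))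
    (hint2 : Integrable (fun z => ρZ z * Real.log (ψ (Ψ π) z))) :
    Lcc π ≤ Lcc (Ψ π) :=
  iteration_increases_likelihood_general φ hφ ρE hρE_meas hρE_nonneg hρE_int ρZ hρZ_meas hρZ_nonneg
    hρZ_int ψ hψ Ψ hΨ Lcc hLcc π hπ_meas hπ_nonneg hπ_int hψπ_pos hint1 hint2
end

section
/- Deconvolution form of the fixed-point map: let ρ_X be a probability density on ℝ^d and let ρ_Z = ψ(ρ_X). Let π be a probability density on ℝ^d with ψ(π)(z) > 0 for almost every z, and assume the function (x̃, z) ↦ ρ_X(x̃) ρ_E(z − φ(x̃)) ρ_E(z − φ(x)) π(x) / ψ(π)(z) is integrable for almost every x. Then for almost every x ∈ ℝ^d, (Ψπ)(x) = ∫_{ℝ^d} ρ_X(x̃) G(x, x̃) dx̃, where G(x, x̃) = ∫_{ℝ^n} p_π^z(x) ρ_E(z − φ(x̃)) dz and p_π^z(x) = ρ_E(z − φ(x)) π(x) / ψ(π)(z). In other words, each iterate of Ψ is a smoothed (kernel-blurred) version of the true density ρ_X. -/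
open MeasureTheory

/-! Substituting `ρ_Z = ψ(ρ_X)` into the definition of `Ψ π` turns it into an iterated integral over
`(z, x̃)`; the integrability hypothesis lets Fubini exchange the order of integration. -/

theorem integral_mul_integral_swap {α β 𝕜 : Type*} [MeasurableSpace α] [MeasurableSpace β]
    [RCLike 𝕜] {μ : Measure α} {ν : Measure β} [SFinite μ] [SFinite ν]
    {f : α → 𝕜} {g : β → 𝕜} {K : α → β → 𝕜}
    (h : Integrable (fun p : α × β => f p.1 * K p.1 p.2 * g p.2) (μ.prod ν)) :
    ∫ z, g z * ∫ x, K x z * f x ∂μ ∂ν = ∫ x, f x * ∫ z, g z * K x z ∂ν ∂μ :=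
  calc ∫ z, g z * ∫ x, K x z * f x ∂μ ∂ν = ∫ z, ∫ x, f x * K x z * g z ∂μ ∂ν := by
        congr with z
        rw [← integral_const_mul]
        congr with x
        ring
    _ = ∫ x, ∫ z, f x * K x z * g z ∂ν ∂μ := (integral_integral_swap h).symm
    _ = ∫ x, f x * ∫ z, g z * K x z ∂ν ∂μ := by
        congr with x
        rw [← integral_const_mul]
        congr with z
        ring

theorem iteration_is_smoothed_true_density_general {d n : ℕ}
    (φ : (Fin d → ℝ) → (Fin n → ℝ))
    (ρE : (Fin n → ℝ) → ℝ)
    (ρX : (Fin d → ℝ) → ℝ)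
    (ψ : ((Fin d → ℝ) → ℝ) → (Fin n → ℝ) → ℝ)
    (hψ : ∀ p z, ψ p z = ∫ x, ρE (z - φ x) * p x)
    (ρZ : (Fin n → ℝ) → ℝ) (hρZ_eq : ∀ z, ρZ z = ψ ρX z)
    (π : (Fin d → ℝ) → ℝ)
    (hint : ∀ᵐ x ∂(volume : Measure (Fin d → ℝ)),
      Integrable (fun p : (Fin d → ℝ) × (Fin n → ℝ) =>
        ρX p.1 * ρE (p.2 - φ p.1) * ρE (p.2 - φ x) * π x / ψ π p.2))
    (Ψ : ((Fin d → ℝ) → ℝ) → (Fin d → ℝ) → ℝ)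
    (hΨ : ∀ p x, Ψ p x = ∫ z, (ρE (z - φ x) * p x / ψ p z) * ρZ z) :
    ∀ᵐ x ∂(volume : Measure (Fin d → ℝ)),
      Ψ π x = ∫ x', ρX x' * ∫ z, (ρE (z - φ x) * π x / ψ π z) * ρE (z - φ x') := by
  filter_upwards [hint] with x hx
  simp_rw [hΨ, hρZ_eq, hψ ρX]
  exact integral_mul_integral_swap <| hx.congr <| ae_of_all _ fun p => by ring

/-- Deconvolution form of the fixed-point map: if `ρ_Z = ψ(ρ_X)` is the
true marginal and `ψ π > 0` a.e., then for a.e. `x`,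
`(Ψ π)(x) = ∫ ρ_X(x̃) G(x, x̃) dx̃` with the kernel
`G(x, x̃) = ∫ p_π^z(x) ρ_E(z − φ(x̃)) dz`, `p_π^z(x) = ρ_E(z − φ(x)) π(x) / ψ π (z)`,
i.e. each iterate of `Ψ` is a kernel-blurred version of the true density `ρ_X`. -/
theorem iteration_is_smoothed_true_density {d n : ℕ}
    (φ : (Fin d → ℝ) → (Fin n → ℝ)) (hφ : Measurable φ)
    (ρE : (Fin n → ℝ) → ℝ) (hρE_meas : Measurable ρE)
    (hρE_nonneg : ∀ e, 0 ≤ ρE e) (hρE_int : (∫ e, ρE e) = 1)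
    (ρX : (Fin d → ℝ) → ℝ) (hρX_meas : Measurable ρX)
    (hρX_nonneg : ∀ x, 0 ≤ ρX x) (hρX_int : (∫ x, ρX x) = 1)
    (ψ : ((Fin d → ℝ) → ℝ) → (Fin n → ℝ) → ℝ)
    (hψ : ∀ p z, ψ p z = ∫ x, ρE (z - φ x) * p x)
    (ρZ : (Fin n → ℝ) → ℝ) (hρZ_eq : ∀ z, ρZ z = ψ ρX z)
    (π : (Fin d → ℝ) → ℝ) (hπ_meas : Measurable π)
    (hπ_nonneg : ∀ x, 0 ≤ π x) (hπ_int : (∫ x, π x) = 1)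
    (hψπ_pos : ∀ᵐ z ∂(volume : Measure (Fin n → ℝ)), 0 < ψ π z)
    (hint : ∀ᵐ x ∂(volume : Measure (Fin d → ℝ)),
      Integrable (fun p : (Fin d → ℝ) × (Fin n → ℝ) =>
        ρX p.1 * ρE (p.2 - φ p.1) * ρE (p.2 - φ x) * π x / ψ π p.2))
    (Ψ : ((Fin d → ℝ) → ℝ) → (Fin d → ℝ) → ℝ)
    (hΨ : ∀ p x, Ψ p x = ∫ z, (ρE (z - φ x) * p x / ψ p z) * ρZ z) :
    ∀ᵐ x ∂(volume : Measure (Fin d → ℝ)),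
      Ψ π x = ∫ x', ρX x' * ∫ z, (ρE (z - φ x) * π x / ψ π z) * ρE (z - φ x') :=
  iteration_is_smoothed_true_density_general φ ρE ρX ψ hψ ρZ hρZ_eq π hint Ψ hΨ
end
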